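/- arXiv:2301.13194 — 4 statements merged into one kernel-verified Lean document; each statement's English description precedes it below -/
import Mathlib

section
/- In the adaptive method with updates M̃_{k+1} = M_k/2 where M_k = 2^{i_k} M̃_k is the smallest power-of-two multiple of M̃_k making the predicate hold, if M̃₀ ≤ βL and the predicate always holds when M ≥ βL, then M_k ≤ 2βL for every k ≥ 0. -/
/-- in the adaptive method (`M_k = 2^{i_k} M̃_k` minimal making the
predicate hold, `M̃_{k+1} = M_k / 2`), if `M̃₀ ≤ βL` and the predicate always holds
whenever `M ≥ βL`, then `M_k ≤ 2 βL` for every `k`. -/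
theorem stmt2 (Q : ℕ → ℝ → Prop) (Mt M : ℕ → ℝ) (i : ℕ → ℕ) (βL : ℝ)
    (hβL : 0 < βL) (hMt0pos : 0 < Mt 0) (hMt0 : Mt 0 ≤ βL)
    (hM : ∀ k, M k = 2 ^ (i k) * Mt k)
    (hhold : ∀ k, Q k (M k))
    (hmin : ∀ k, ∀ j : ℕ, j < i k → ¬ Q k (2 ^ j * Mt k))
    (hacc : ∀ k, ∀ m : ℝ, βL ≤ m → Q k m)
    (hrec : ∀ k, Mt (k + 1) = M k / 2) :
    ∀ k, M k ≤ 2 * βL := by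
  have key : ∀ k, Mt k ≤ βL ∧ M k ≤ 2 * βL := by
    intro k
    induction k with
    | zero =>
      refine ⟨hMt0, ?_⟩
      rcases Nat.eq_zero_or_pos (i 0) with h0 | h0
      · rw [hM 0, h0]; simp; nlinarith
      · have hlt : 2 ^ (i 0 - 1) * Mt 0 < βL := by
          by_contra h
          exact hmin 0 (i 0 - 1) (Nat.sub_lt h0 one_pos) (hacc 0 _ (le_of_not_gt h))
        have : M 0 = 2 * (2 ^ (i 0 - 1) * Mt 0) := by
          rw [hM 0, ← mul_assoc, ← pow_succ']
          congr 2
          omega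
        linarith
    | succ n ih =>
      have hMt : Mt (n + 1) ≤ βL := by rw [hrec n]; linarith [ih.2]
      refine ⟨hMt, ?_⟩
      rcases Nat.eq_zero_or_pos (i (n+1)) with h0 | h0
      · rw [hM (n+1), h0]; simp; nlinarith
      · have hlt : 2 ^ (i (n+1) - 1) * Mt (n+1) < βL := by
          by_contra h
          exact hmin (n+1) (i (n+1) - 1) (Nat.sub_lt h0 one_pos)
            (hacc (n+1) _ (le_of_not_gt h))
        have : M (n+1) = 2 * (2 ^ (i (n+1) - 1) * Mt (n+1)) := by
          rw [hM (n+1), ← mul_assoc, ← pow_succ']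
          congr 2
          omega
        linarith
  exact fun k => (key k).2
end

section
/- In the adaptive method with M̃₀ ≤ βL, the total number of gradient steps (predicate evaluations) performed during the first N iterations satisfies Σ_{k=0}^{N−1}(i_k + 1) ≤ 2N + log₂(2βL/M̃₀), i.e., on average at most about 2 per iteration. -/
/-- with `M̃₀ ≤ βL`, the total number of gradient-step trials
(`i_k + 1` at iteration `k`) during the first `N` iterations is at most
`2 N + log₂(2 βL / M̃₀)`. -/
theorem stmt3 (Q : ℕ → ℝ → Prop) (Mt M : ℕ → ℝ) (i : ℕ → ℕ) (βL : ℝ)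
    (hβL : 0 < βL) (hMt0pos : 0 < Mt 0) (hMt0 : Mt 0 ≤ βL)
    (hM : ∀ k, M k = 2 ^ (i k) * Mt k)
    (hhold : ∀ k, Q k (M k))
    (hmin : ∀ k, ∀ j : ℕ, j < i k → ¬ Q k (2 ^ j * Mt k))
    (hacc : ∀ k, ∀ m : ℝ, βL ≤ m → Q k m)
    (hrec : ∀ k, Mt (k + 1) = M k / 2) :
    ∀ N : ℕ, (∑ k ∈ Finset.range N, ((i k : ℝ) + 1)) ≤
      2 * N + Real.logb 2 (2 * βL / Mt 0) := by
  have hMtpos : ∀ k, 0 < Mt k := by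
    intro k
    induction k with
    | zero => exact hMt0pos
    | succ k ih =>
      rw [hrec k, hM k]; positivity
  have hMtle : ∀ k, Mt k ≤ βL := by
    intro k
    induction k with
    | zero => exact hMt0
    | succ k ih =>
      rw [hrec k]
      have hMk : M k ≤ 2 * βL := by
        rcases Nat.eq_zero_or_pos (i k) with h0 | hpos
        · rw [hM k, h0, pow_zero, one_mul]; linarith
        · have hj := hmin k (i k - 1) (Nat.sub_lt hpos one_pos)
          have hlt : 2 ^ (i k - 1) * Mt k < βL := by
            by_contra h
            exact hj (hacc k _ (le_of_not_gt h))
          have heq : M k = 2 * (2 ^ (i k - 1) * Mt k) := by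
            rw [hM k, ← mul_assoc]
            congr 1
            rw [← pow_succ']
            congr 1
            omega
          linarith
      linarith
  have hi : ∀ k, (i k : ℝ) + 1 = 2 + (Real.logb 2 (Mt (k + 1)) - Real.logb 2 (Mt k)) := by
    intro k
    have h1 : Mt (k + 1) = 2 ^ i k * Mt k / 2 := by rw [hrec k, hM k]
    have h2 : Real.logb 2 (Mt (k + 1))
        = (i k : ℝ) + Real.logb 2 (Mt k) - 1 := by
      rw [h1, Real.logb_div (mul_pos (by positivity) (hMtpos k)).ne' (by norm_num),
        Real.logb_mul (by positivity) (ne_of_gt (hMtpos k))]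
      rw [show ((2 : ℝ) ^ i k) = (2 : ℝ) ^ (i k : ℕ) from rfl, Real.logb_pow]
      simp [Real.logb_self_eq_one]
    rw [h2]; ring
  intro N
  have hsum : (∑ k ∈ Finset.range N, ((i k : ℝ) + 1))
      = 2 * N + (Real.logb 2 (Mt N) - Real.logb 2 (Mt 0)) := by
    calc (∑ k ∈ Finset.range N, ((i k : ℝ) + 1))
        = ∑ k ∈ Finset.range N,
            (2 + (Real.logb 2 (Mt (k + 1)) - Real.logb 2 (Mt k))) := by
          exact Finset.sum_congr rfl fun k _ => hi k
      _ = 2 * N + ∑ k ∈ Finset.range N,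
            (Real.logb 2 (Mt (k + 1)) - Real.logb 2 (Mt k)) := by
          rw [Finset.sum_add_distrib]; simp [mul_comm]
      _ = 2 * N + (Real.logb 2 (Mt N) - Real.logb 2 (Mt 0)) := by
          rw [Finset.sum_range_sub (fun k => Real.logb 2 (Mt k))]
  rw [hsum, Real.logb_div (by positivity) (ne_of_gt hMt0pos)]
  have hlog : Real.logb 2 (Mt N) ≤ Real.logb 2 (2 * βL) := by
    apply Real.logb_le_logb_of_le (by norm_num : (1:ℝ) < 2) (hMtpos N)
    linarith [hMtle N]
  linarith
end

section
/- For every k ≥ 0 in the adaptive method: if M̃₀ ≤ βL and any M ≥ βL is acceptable, then M̃_k ≤ βL for all k. -/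
/-- if `M̃₀ ≤ βL` and any `M ≥ βL` is acceptable, then the
optimistic guess satisfies `M̃_k ≤ βL` for all `k`. -/
theorem stmt4 (Q : ℕ → ℝ → Prop) (Mt M : ℕ → ℝ) (i : ℕ → ℕ) (βL : ℝ)
    (hβL : 0 < βL) (hMt0pos : 0 < Mt 0) (hMt0 : Mt 0 ≤ βL)
    (hM : ∀ k, M k = 2 ^ (i k) * Mt k)
    (hhold : ∀ k, Q k (M k))
    (hmin : ∀ k, ∀ j : ℕ, j < i k → ¬ Q k (2 ^ j * Mt k))
    (hacc : ∀ k, ∀ m : ℝ, βL ≤ m → Q k m)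
    (hrec : ∀ k, Mt (k + 1) = M k / 2) :
    ∀ k, Mt k ≤ βL := by
  have key : ∀ k, 0 < Mt k ∧ Mt k ≤ βL := by
    intro k
    induction k with
    | zero => exact ⟨hMt0pos, hMt0⟩
    | succ k ih =>
      obtain ⟨hpos, hle⟩ := ih
      have hMk : M k < 2 * βL := by
        rcases Nat.eq_zero_or_pos (i k) with h0 | h1
        · rw [hM k, h0]
          simp only [pow_zero, one_mul]
          nlinarith
        · have hj := hmin k (i k - 1) (Nat.sub_lt h1 one_pos)
          have hlt : (2 : ℝ) ^ (i k - 1) * Mt k < βL := by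
            by_contra h
            exact hj (hacc k _ (le_of_not_gt h))
          have : (2 : ℝ) ^ (i k) = 2 * 2 ^ (i k - 1) := by
            rw [← pow_succ']
            congr 1
            omega
          rw [hM k, this]
          nlinarith
      have hMkpos : 0 < M k := by
        rw [hM k]
        positivity
      rw [hrec k]
      constructor
      · linarith
      · linarith
  exact fun k => (key k).2
end

section
/- In the FastGradientStep parameterization with ρ > 0 and M > ρ, let A₁ > 0 and let the sequence be defined by A_{k+1} = A_k + a_{k+1}, where a_{k+1} > 0 solves M a²/(A_k + a) = 1 + ρ(A_k + a); then for every k, A_{k+1} ≥ A_k · (1 + √(ρ/M)). -/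
/-- in the `ρ > 0` case with `M > ρ`, the FGM coefficients grow
at a linear rate: `A_{k+1} ≥ A_k (1 + √(ρ/M))` for all `k ≥ 1`. -/
theorem stmt15 (M ρ : ℝ) (hρ : 0 < ρ) (hρM : ρ < M) (A a : ℕ → ℝ)
    (hA1 : 0 < A 1)
    (ha : ∀ k : ℕ, 0 < a (k + 1))
    (heq : ∀ k : ℕ, M * (a (k + 1)) ^ 2 / (A k + a (k + 1)) = 1 + ρ * (A k + a (k + 1)))
    (hrec : ∀ k : ℕ, A (k + 1) = A k + a (k + 1)) :
    ∀ k : ℕ, 1 ≤ k → A k * (1 + Real.sqrt (ρ / M)) ≤ A (k + 1) := by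
  have hM : 0 < M := hρ.trans hρM
  set t := Real.sqrt (ρ / M) with ht
  have ht0 : 0 < t := Real.sqrt_pos.mpr (div_pos hρ hM)
  have ht2 : t ^ 2 = ρ / M := Real.sq_sqrt (le_of_lt (div_pos hρ hM))
  have ht1 : t < 1 := by
    rw [ht, show (1 : ℝ) = Real.sqrt 1 by simp]
    exact Real.sqrt_lt_sqrt (le_of_lt (div_pos hρ hM)) (by rw [div_lt_one hM]; exact hρM)
  -- positivity of A k for k ≥ 1
  have hApos : ∀ k : ℕ, 1 ≤ k → 0 < A k := by
    intro k hk
    induction k with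
    | zero => omega
    | succ n ih =>
      rcases Nat.eq_or_lt_of_le hk with h | h
      · simpa [← h] using hA1
      · have hn : 1 ≤ n := by omega
        rw [hrec n]
        exact add_pos (ih hn) (ha n)
  intro k hk
  have hAk : 0 < A k := hApos k hk
  have hB : 0 < A k + a (k + 1) := add_pos hAk (ha k)
  have h1 : M * (a (k + 1)) ^ 2 = (A k + a (k + 1)) * (1 + ρ * (A k + a (k + 1))) := by
    have := heq k
    field_simp at this
    linarith [this]
  have h2 : ρ * (A k + a (k + 1)) ^ 2 ≤ M * (a (k + 1)) ^ 2 := by nlinarith [hB]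
  have h3 : t * (A k + a (k + 1)) ≤ a (k + 1) := by
    have hsq : (t * (A k + a (k + 1))) ^ 2 ≤ (a (k + 1)) ^ 2 := by
      rw [mul_pow, ht2]
      rw [div_mul_eq_mul_div, div_le_iff₀ hM]
      nlinarith [h2]
    nlinarith [hsq, mul_pos ht0 hB, ha k]
  have h4 : A k ≤ (A k + a (k + 1)) * (1 - t) := by nlinarith
  have h5 : A k * (1 + t) ≤ A k + a (k + 1) := by nlinarith [sq_nonneg t]
  rw [hrec k]
  exact h5
end
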